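/- arXiv:2401.12833 — 4 statements merged into one kernel-verified Lean document; each statement's English description precedes it below -/
import Mathlib

section
/- For every i ∈ V and all pairwise distinct k₁, k₂, k₃ ∈ V ∖ {i, ī}, the three vectors α(i,k₁), α(i,k₂), α(i,k₃) ∈ ℤ^{n+1} are linearly independent (over ℚ); that is, the GKM graph 𝒬_{2n} is three-independent. -/
noncomputable section

/-- Standard basis vector `e_k` of `ℤ^{n+1}` (1-indexed), with `e 0 = 0`. -/
def ee (n k : ℕ) : Fin (n+1) → ℤ := fun t => if (t : ℕ) + 1 = k then 1 else 0

/-- The function `h : V → ℤ^{n+1}`. -/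
def hh (n j : ℕ) : Fin (n+1) → ℤ :=
  if j ≤ n+2 then ee n (j-1) - ee n (n+1) else ee n n - ee n (2*n+2-j)

/-- The Laurent polynomial ring `R = ℤ[y₁^{±1},…,y_{n+1}^{±1}]`. -/
abbrev Rg (n : ℕ) : Type := AddMonoidAlgebra ℤ (Fin (n+1) → ℤ)

/-- The monomial `e^w`. -/
def ex (n : ℕ) (w : Fin (n+1) → ℤ) : Rg n := AddMonoidAlgebra.single w 1

/-- `ī = 2n+3-i`. -/
def bar (n i : ℕ) : ℕ := 2*n+3 - i

/-- Membership in the vertex set `V = {1,…,2n+2}`. -/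
def memV (n i : ℕ) : Prop := 1 ≤ i ∧ i ≤ 2*n+2

/-- The axial function `α(i,j) = h(j) - h(i)`. -/
def axl (n i j : ℕ) : Fin (n+1) → ℤ := hh n j - hh n i

/-- The K-class `M_v`. -/
def Mv (n v : ℕ) (l : ℕ) : Rg n :=
  if l = v then 1
  else if l = bar n v then ex n (ee n n - ee n (n+1) - (2:ℤ) • hh n (bar n v))
  else ex n (hh n v - hh n l)

/-- The pointwise inverse `M_v⁻¹`. -/
def MvInv (n v : ℕ) (l : ℕ) : Rg n :=
  if l = v then 1
  else if l = bar n v then ex n (-(ee n n - ee n (n+1) - (2:ℤ) • hh n (bar n v)))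
  else ex n (hh n l - hh n v)

/-- A subset `P ⊆ V` is admissible if it is nonempty and contains no pair `{i, ī}`. -/
def admissible (n : ℕ) (P : Finset ℕ) : Prop :=
  P.Nonempty ∧ (∀ i ∈ P, memV n i) ∧ (∀ i ∈ P, bar n i ∉ P)

/-- The vertex set as a finset. -/
def Vfin (n : ℕ) : Finset ℕ := Finset.Icc 1 (2*n+2)

/-- The Thom class `Δ_P`. -/
def Dl (n : ℕ) (P : Finset ℕ) (l : ℕ) : Rg n :=
  if l ∈ P then
    ∏ k ∈ (Vfin n).filter (fun k => k ∉ P ∧ k ≠ bar n l), (1 - ex n (axl n l k))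
  else 0

/-- `φ : V → R` is a K-class if `1 - e^{α(i,j)}` divides `φ(i) - φ(j)` for every edge `(i,j)`. -/
def isKClass (n : ℕ) (f : ℕ → Rg n) : Prop :=
  ∀ i j : ℕ, memV n i → memV n j → j ≠ i → j ≠ bar n i →
    (1 - ex n (axl n i j)) ∣ (f i - f j)

/-!
Write `e_1, …, e_{n+1}` for the standard basis and change to the basis
`f_1 = -(e_n + e_{n+1})/2`, `f_p = e_{p-1} - (e_n + e_{n+1})/2` (`2 ≤ p ≤ n`),
`f_{n+1} = (e_n - e_{n+1})/2`. Then `h(j) = f_{n+1} + x_j` with `x_j = f_j` for `j ≤ n+1` and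
`x_j = -f_ī` for `j ≥ n+2`: the vertices of `𝒬_{2n}` become the vertices `±f_p` of a
cross-polytope, `ī` being the antipode of `j`, and `α(i,k) = x_k - x_i`.
For `k ∉ {i, ī}` the point `x_k` has coordinate `0` on the axis of `x_i`, so a relation
`∑ g_k α(i,k) = 0` splits into `∑ g_k = 0` and `∑ g_k x_k = 0`; three distinct vertices of a
cross-polytope carry no such affine relation, because at most two of them share an axis.
-/

section CrossPolytope

variable {K ι : Type*} [Field K] [DecidableEq ι] {p : Fin 3 → ι} {s g : Fin 3 → K}

lemma Fin.exists_univ_eq_three {a b : Fin 3} (hab : a ≠ b) :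
    ∃ c, c ≠ a ∧ c ≠ b ∧ (Finset.univ : Finset (Fin 3)) = {a, b, c} := by
  revert a b; decide

theorem eq_zero_of_sum_smul_single_eq_zero [NeZero (2 : K)] (hs : ∀ j, s j = 1 ∨ s j = -1)
    (hps : Function.Injective fun j => (p j, s j)) (hsum : ∑ j, g j = 0)
    (hrel : ∑ j, g j • Pi.single (p j) (s j) = (0 : ι → K)) : g = 0 := by
  have hs0 (j : Fin 3) : s j ≠ 0 := by rcases hs j with h | h <;> simp [h]
  have anti (j l : Fin 3) (hjl : j ≠ l) (hp : p j = p l) : s l = -s j := by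
    have hne : s j ≠ s l := fun h => hjl (hps (Prod.ext hp h))
    rcases hs j with h | h <;> rcases hs l with h' | h' <;> simp_all
  have hfib (j : Fin 3) : ∑ l, (if p j = p l then g l * s l else 0) = 0 := by
    simpa [Finset.sum_apply, Pi.single_apply] using congr_fun hrel (p j)
  funext j
  by_cases hpair : ∃ a b, a ≠ b ∧ p a = p b
  · obtain ⟨a, b, hab, hp⟩ := hpair
    obtain ⟨c, hca, hcb, huniv⟩ := Fin.exists_univ_eq_three hab
    -- the signs on one axis are `±1`, so a third vertex cannot share the axis of `a` and `b`
    have hpc : p c ≠ p b := fun h => hca <| hps <| Prod.ext (h.trans hp.symm) <|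
      show s c = s a by rw [anti b c hcb.symm h.symm, anti a b hab hp, neg_neg]
    have hfa := hfib a
    have hfc := hfib c
    rw [huniv] at hsum hfa hfc
    simp only [Finset.sum_insert, Finset.sum_singleton, Finset.mem_insert, Finset.mem_singleton,
      hab, hca.symm, hcb.symm, hp, hpc, hpc.symm, anti a b hab hp, if_true, if_false, or_self,
      not_false_eq_true] at hsum hfa hfc
    have hgc : g c = 0 := by simpa [hs0] using hfc
    have hgab : g a = g b := by
      have : (g a - g b) * s a = 0 := by linear_combination hfa
      simpa [hs0, sub_eq_zero] using this
    have hga : g a = 0 := by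
      have : 2 * g a = 0 := by linear_combination hsum + hgab - hgc
      exact (mul_eq_zero.mp this).resolve_left two_ne_zero
    have hj : j ∈ ({a, b, c} : Finset (Fin 3)) := huniv ▸ Finset.mem_univ j
    simp only [Finset.mem_insert, Finset.mem_singleton] at hj
    rcases hj with rfl | rfl | rfl
    exacts [hga, hgab ▸ hga, hgc]
  · push Not at hpair
    have := hfib j
    rw [Finset.sum_eq_single j (fun l _ hl => if_neg (hpair j l hl.symm)) (by simp)] at this
    simpa [hs0] using this

theorem linearIndependent_single_sub_single [NeZero (2 : K)] (hs : ∀ j, s j = 1 ∨ s j = -1)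
    (hps : Function.Injective fun j => (p j, s j)) {q : ι} (hq : ∀ j, p j ≠ q) {r : K}
    (hr : r ≠ 0) : LinearIndependent K fun j => (Pi.single (p j) (s j) - Pi.single q r : ι → K) := by
  rw [Fintype.linearIndependent_iff]
  intro g hg
  have hsum : ∑ j, g j = 0 := by
    simpa [Finset.sum_apply, Pi.single_apply, hr, Ne.symm (hq _), ← Finset.sum_mul] using
      congr_fun hg q
  have hrel : ∑ j, g j • Pi.single (p j) (s j) = (0 : ι → K) := by
    simpa [smul_sub, Finset.sum_sub_distrib, ← Finset.sum_smul, hsum, sub_eq_zero] using hg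
  exact congr_fun (eq_zero_of_sum_smul_single_eq_zero hs hps hsum hrel)

end CrossPolytope

namespace QuadricGKM

def axis (n j : ℕ) : ℕ := min j (bar n j)

def axisSign (n j : ℕ) : ℚ := if j ≤ n + 1 then 1 else -1

/-- The `f`-coordinates of `e_k` (and of `e_0 = 0`): `e_k = f_{k+1} - f_1` for `1 ≤ k ≤ n` and
`e_{n+1} = -f_1 - f_{n+1}`. -/
def eeCoord (n k : ℕ) : ℕ → ℚ :=
  if k = 0 then 0
  else if k ≤ n then Pi.single (k + 1) 1 - Pi.single 1 1
  else -Pi.single 1 1 - Pi.single (n + 1) 1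

def crossCoord (n : ℕ) : (Fin (n + 1) → ℚ) →ₗ[ℚ] ℕ → ℚ :=
  Fintype.linearCombination ℚ fun t => eeCoord n (t + 1)

lemma eeCoord_zero (n : ℕ) : eeCoord n 0 = 0 := rfl

lemma eeCoord_of_le {n k : ℕ} (hk0 : k ≠ 0) (hk : k ≤ n) :
    eeCoord n k = Pi.single (k + 1) 1 - Pi.single 1 1 := by
  simp [eeCoord, hk0, hk]

lemma eeCoord_succ (n : ℕ) : eeCoord n (n + 1) = -Pi.single 1 1 - Pi.single (n + 1) 1 := by
  simp [eeCoord]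

lemma crossCoord_ee {n k : ℕ} (hk : k ≤ n + 1) :
    crossCoord n (fun t => (ee n k t : ℚ)) = eeCoord n k := by
  rw [crossCoord, Fintype.linearCombination_apply]
  rcases Nat.eq_zero_or_pos k with rfl | hk0
  · simp [ee, eeCoord_zero]
  · rw [Finset.sum_eq_single ⟨k - 1, by omega⟩]
    · simp [ee, Nat.sub_add_cancel hk0]
    · intro t _ ht
      simp [ee, Fin.ext_iff] at ht ⊢
      omega
    · simp

lemma crossCoord_ee_sub {n a b : ℕ} (ha : a ≤ n + 1) (hb : b ≤ n + 1) :
    crossCoord n (fun t => ((ee n a - ee n b) t : ℚ)) = eeCoord n a - eeCoord n b := by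
  rw [← crossCoord_ee ha, ← crossCoord_ee hb, ← map_sub]
  congr 1
  funext t
  simp

lemma crossCoord_hh {n j : ℕ} (hj : memV n j) :
    crossCoord n (fun t => (hh n j t : ℚ)) =
      Pi.single (axis n j) (axisSign n j) + Pi.single (n + 1) 1 := by
  obtain ⟨hj1, hj2⟩ := hj
  have hlow (h : j ≤ n + 2) : hh n j = ee n (j - 1) - ee n (n + 1) := if_pos h
  have hhigh (h : ¬j ≤ n + 2) : hh n j = ee n n - ee n (2 * n + 2 - j) := if_neg h
  obtain rfl | hj | rfl | hj | ⟨hn, rfl⟩ : j = 1 ∨ (2 ≤ j ∧ j ≤ n + 1) ∨ j = n + 2 ∨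
      (n + 3 ≤ j ∧ j ≤ 2 * n + 1) ∨ (1 ≤ n ∧ j = 2 * n + 2) := by
    omega
  · have haxis : axis n 1 = 1 := by unfold axis bar; omega
    rw [hlow (by omega), crossCoord_ee_sub (by omega) le_rfl, Nat.sub_self, eeCoord_zero,
      eeCoord_succ, haxis, axisSign, if_pos (by omega)]
    abel
  · have haxis : axis n j = j := min_eq_left (by unfold bar; omega)
    rw [hlow (by omega), crossCoord_ee_sub (by omega) le_rfl, eeCoord_of_le (by omega) (by omega),
      eeCoord_succ, Nat.sub_add_cancel (by omega : 1 ≤ j), haxis, axisSign, if_pos hj.2]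
    abel
  · have haxis : axis n (n + 2) = n + 1 := by unfold axis bar; omega
    rw [hlow le_rfl, show n + 2 - 1 = n + 1 by omega, sub_self, haxis, axisSign, if_neg (by omega),
      ← Pi.single_add, neg_add_cancel, Pi.single_zero]
    simp [← Pi.zero_def]
  · have haxis : axis n j = 2 * n + 3 - j := min_eq_right (by unfold bar; omega)
    rw [hhigh (by omega), crossCoord_ee_sub (by omega) (by omega), eeCoord_of_le (by omega) le_rfl,
      eeCoord_of_le (by omega) (by omega), haxis, axisSign, if_neg (by omega),
      show 2 * n + 2 - j + 1 = 2 * n + 3 - j by omega, Pi.single_neg]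
    abel
  · have haxis : axis n (2 * n + 2) = 1 := by unfold axis bar; omega
    rw [hhigh (by omega), crossCoord_ee_sub (by omega) (by omega), eeCoord_of_le (by omega) le_rfl,
      Nat.sub_self, eeCoord_zero, haxis, axisSign, if_neg (by omega), Pi.single_neg]
    abel

lemma crossCoord_axl {n i j : ℕ} (hi : memV n i) (hj : memV n j) :
    crossCoord n (fun t => (axl n i j t : ℚ)) =
      Pi.single (axis n j) (axisSign n j) - Pi.single (axis n i) (axisSign n i) := by
  have hsub : (fun t => (axl n i j t : ℚ)) = (fun t => (hh n j t : ℚ)) - fun t => (hh n i t : ℚ) := by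
    funext t
    simp [axl]
  rw [hsub, map_sub, crossCoord_hh hj, crossCoord_hh hi]
  abel

lemma axisSign_eq_one_or_eq_neg_one (n j : ℕ) : axisSign n j = 1 ∨ axisSign n j = -1 := by
  unfold axisSign
  split_ifs <;> simp

lemma axisSign_ne_zero (n j : ℕ) : axisSign n j ≠ 0 := by
  rcases axisSign_eq_one_or_eq_neg_one n j with h | h <;> simp [h]

lemma eq_of_axis_eq_of_axisSign_eq {n a b : ℕ} (ha : memV n a) (hb : memV n b)
    (haxis : axis n a = axis n b) (hsign : axisSign n a = axisSign n b) : a = b := by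
  unfold axisSign at hsign
  unfold axis bar memV at *
  split_ifs at hsign <;> norm_num at hsign <;> omega

lemma axis_ne_axis {n i k : ℕ} (hi : memV n i) (hk : memV n k) (hki : k ≠ i) (hkib : k ≠ bar n i) :
    axis n k ≠ axis n i := by
  unfold axis bar memV at *
  omega

theorem linearIndependent_axl {n i : ℕ} {k : Fin 3 → ℕ} (hk : Function.Injective k)
    (hi : memV n i) (hkV : ∀ j, memV n (k j)) (hki : ∀ j, k j ≠ i) (hkib : ∀ j, k j ≠ bar n i) :
    LinearIndependent ℚ fun j t => (axl n i (k j) t : ℚ) := by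
  refine LinearIndependent.of_comp (crossCoord n) ?_
  have hcomp : crossCoord n ∘ (fun j t => (axl n i (k j) t : ℚ)) = fun j =>
      Pi.single (axis n (k j)) (axisSign n (k j)) - Pi.single (axis n i) (axisSign n i) :=
    funext fun j => crossCoord_axl hi (hkV j)
  have hps : Function.Injective fun j => (axis n (k j), axisSign n (k j)) := fun a b hab =>
    hk <| eq_of_axis_eq_of_axisSign_eq (hkV a) (hkV b) (Prod.ext_iff.mp hab).1
      (Prod.ext_iff.mp hab).2
  rw [hcomp]
  exact linearIndependent_single_sub_single (fun j => axisSign_eq_one_or_eq_neg_one n (k j)) hps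
    (fun j => axis_ne_axis hi (hkV j) (hki j) (hkib j)) (axisSign_ne_zero n i)

end QuadricGKM

theorem three_independent_general (n : ℕ) (i k₁ k₂ k₃ : ℕ)
    (hi : memV n i) (hk₁ : memV n k₁) (hk₂ : memV n k₂) (hk₃ : memV n k₃)
    (h₁i : k₁ ≠ i) (h₁ib : k₁ ≠ bar n i) (h₂i : k₂ ≠ i) (h₂ib : k₂ ≠ bar n i)
    (h₃i : k₃ ≠ i) (h₃ib : k₃ ≠ bar n i)
    (h12 : k₁ ≠ k₂) (h13 : k₁ ≠ k₃) (h23 : k₂ ≠ k₃) :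
    LinearIndependent ℚ
      ![(fun t => ((axl n i k₁ t : ℤ) : ℚ)),
        (fun t => ((axl n i k₂ t : ℤ) : ℚ)),
        (fun t => ((axl n i k₃ t : ℤ) : ℚ))] := by
  have hk : Function.Injective ![k₁, k₂, k₃] := by
    simp [Function.Injective, Fin.forall_fin_succ, h12, h13, h23, h12.symm, h13.symm, h23.symm]
  convert QuadricGKM.linearIndependent_axl hk hi (by simp [Fin.forall_fin_succ, *])
    (by simp [Fin.forall_fin_succ, *]) (by simp [Fin.forall_fin_succ, *]) using 1
  funext j
  fin_cases j <;> rfl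

/-- The GKM graph `𝒬_{2n}` is three-independent: for every `i ∈ V` and
pairwise distinct `k₁, k₂, k₃ ∈ V ∖ {i, ī}`, the vectors `α(i,k₁), α(i,k₂), α(i,k₃)`
are linearly independent over `ℚ`. -/
theorem three_independent (n : ℕ) (hn : 1 ≤ n) (i k₁ k₂ k₃ : ℕ)
    (hi : memV n i) (hk₁ : memV n k₁) (hk₂ : memV n k₂) (hk₃ : memV n k₃)
    (h₁i : k₁ ≠ i) (h₁ib : k₁ ≠ bar n i) (h₂i : k₂ ≠ i) (h₂ib : k₂ ≠ bar n i)
    (h₃i : k₃ ≠ i) (h₃ib : k₃ ≠ bar n i)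
    (h12 : k₁ ≠ k₂) (h13 : k₁ ≠ k₃) (h23 : k₂ ≠ k₃) :
    LinearIndependent ℚ
      ![(fun t => ((axl n i k₁ t : ℤ) : ℚ)),
        (fun t => ((axl n i k₂ t : ℤ) : ℚ)),
        (fun t => ((axl n i k₃ t : ℤ) : ℚ))] :=
  three_independent_general n i k₁ k₂ k₃ hi hk₁ hk₂ hk₃ h₁i h₁ib h₂i h₂ib h₃i h₃ib h12 h13 h23
end
end

section
/- For every i ∈ V, the set {α(i,j) : j ∈ V, j ≠ i, j ≠ ī} generates ℤ^{n+1} as an abelian group; that is, the axial function α is effective. -/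
noncomputable section

/-!
The key identity is `h(j) + h(j̄) = e_n - e_{n+1}` for every `j ∈ V`. Since `n ≥ 1` there is a
pair `{j, j̄}` disjoint from `{i, ī}`, and then `α(i, ī) = α(i, j) + α(i, j̄)`. So the span of the
`α(i, ·)` contains `α(i, j)` for every `j ∈ V`, hence every `α(1, k + 1) = α(i, k + 1) - α(i, 1)`,
which is `e_k`.
-/

lemma ee_zero (n : ℕ) : ee n 0 = 0 := by
  funext t
  simp [ee]

lemma ee_succ (n : ℕ) (t : Fin (n+1)) : ee n (t + 1) = Pi.single t 1 := by
  funext s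
  simp [ee, Pi.single_apply, Fin.ext_iff, eq_comm]

lemma memV_bar {n j : ℕ} (hj : memV n j) : memV n (bar n j) := by
  unfold memV bar at *
  omega

lemma hh_add_hh_bar {n j : ℕ} (hj : memV n j) :
    hh n j + hh n (bar n j) = ee n n - ee n (n+1) := by
  unfold memV at hj
  unfold hh bar
  split_ifs <;> funext t <;> simp only [ee, Pi.add_apply, Pi.sub_apply] <;> split_ifs <;> omega

lemma axl_one_add_two (n : ℕ) (t : Fin (n+1)) : axl n 1 (t + 2) = Pi.single t 1 := by
  have ht := t.isLt
  rw [axl, hh, if_pos (by omega), hh, if_pos (by omega), Nat.sub_self, ee_zero, ← ee_succ]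
  abel

lemma axl_bar_eq_add {n i j : ℕ} (hi : memV n i) (hj : memV n j) :
    axl n i (bar n i) = axl n i j + axl n i (bar n j) := by
  unfold axl
  linear_combination (norm := module) (hh_add_hh_bar hi).trans (hh_add_hh_bar hj).symm

lemma exists_memV_pair_ne {n i : ℕ} (hn : 1 ≤ n) (hi : memV n i) :
    ∃ j, memV n j ∧ j ≠ i ∧ j ≠ bar n i ∧ bar n j ≠ i ∧ bar n j ≠ bar n i := by
  unfold memV bar at *
  by_cases h : i = 1 ∨ i = 2*n+2
  · exact ⟨2, by omega⟩
  · exact ⟨1, by omega⟩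

lemma Submodule.eq_top_of_forall_single_mem {R ι : Type*} [Semiring R] [Fintype ι]
    [DecidableEq ι] (M : Submodule R (ι → R)) (h : ∀ t, Pi.single t 1 ∈ M) : M = ⊤ := by
  rw [eq_top_iff, ← (Pi.basisFun R ι).span_eq, Submodule.span_le]
  rintro _ ⟨t, rfl⟩
  simpa using h t

/-- The axial function `α` is effective: for every `i ∈ V`, the set
`{α(i,j) : j ∈ V, j ≠ i, j ≠ ī}` generates `ℤ^{n+1}` as an abelian group. -/
theorem axial_effective (n : ℕ) (hn : 1 ≤ n) (i : ℕ) (hi : memV n i) :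
    Submodule.span ℤ {w : Fin (n+1) → ℤ |
      ∃ j : ℕ, memV n j ∧ j ≠ i ∧ j ≠ bar n i ∧ w = axl n i j} = ⊤ := by
  set M := Submodule.span ℤ {w : Fin (n+1) → ℤ |
    ∃ j : ℕ, memV n j ∧ j ≠ i ∧ j ≠ bar n i ∧ w = axl n i j}
  have h_nbr : ∀ j, memV n j → j ≠ i → j ≠ bar n i → axl n i j ∈ M :=
    fun j hj hji hjb => Submodule.subset_span ⟨j, hj, hji, hjb, rfl⟩
  have h_bar : axl n i (bar n i) ∈ M := by
    obtain ⟨j, hj, hji, hjb, hbi, hbb⟩ := exists_memV_pair_ne hn hi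
    rw [axl_bar_eq_add hi hj]
    exact add_mem (h_nbr j hj hji hjb) (h_nbr _ (memV_bar hj) hbi hbb)
  have h_all : ∀ j, memV n j → axl n i j ∈ M := by
    intro j hj
    by_cases hji : j = i
    · simp [hji, axl]
    by_cases hjb : j = bar n i
    · exact hjb ▸ h_bar
    exact h_nbr j hj hji hjb
  refine M.eq_top_of_forall_single_mem fun t => ?_
  have ht := t.isLt
  rw [← axl_one_add_two, axl, ← sub_sub_sub_cancel_right _ _ (hh n i)]
  exact sub_mem (h_all _ ⟨by omega, by omega⟩) (h_all 1 ⟨le_rfl, by omega⟩)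
end
end

section
/- (Relation 3) Let P ⊆ V be an admissible subset with |P| > 1 and let i ∈ P. Then, as functions V → R (operations pointwise), Δ_P · (1 − M_i) = Δ_{P∖{i}}. -/
noncomputable section

theorem Finset.filter_notMem_erase_and {α : Type*} [DecidableEq α] {s P : Finset α}
    {q : α → Prop} [DecidablePred q] {i : α} (his : i ∈ s) (hiq : q i) :
    s.filter (fun k => k ∉ P.erase i ∧ q k) = insert i (s.filter (fun k => k ∉ P ∧ q k)) := by
  ext k
  by_cases hki : k = i
  · subst hki
    simp [his, hiq]
  · simp [hki]

theorem Mv_of_ne {n v l : ℕ} (hlv : l ≠ v) (hlbar : l ≠ bar n v) :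
    Mv n v l = ex n (axl n l v) := by
  simp [Mv, hlv, hlbar, axl]

theorem Dl_of_notMem {n : ℕ} {P : Finset ℕ} {l : ℕ} (hl : l ∉ P) : Dl n P l = 0 :=
  if_neg hl

theorem Dl_erase {n : ℕ} {P : Finset ℕ} {i l : ℕ} (hiV : memV n i) (hiP : i ∈ P)
    (hlP : l ∈ P) (hli : l ≠ i) (hibar : i ≠ bar n l) :
    Dl n (P.erase i) l = Dl n P l * (1 - ex n (axl n l i)) := by
  have hiVfin : i ∈ Vfin n := Finset.mem_Icc.mpr hiV
  have hi_notin : i ∉ (Vfin n).filter (fun k => k ∉ P ∧ k ≠ bar n l) := by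
    simp [hiP]
  rw [Dl, Dl, if_pos hlP, if_pos (Finset.mem_erase.mpr ⟨hli, hlP⟩),
    Finset.filter_notMem_erase_and hiVfin hibar, Finset.prod_insert hi_notin, mul_comm]

theorem relation3_general (n : ℕ) (P : Finset ℕ) (hP : admissible n P)
    (i : ℕ) (hi : i ∈ P) :
    ∀ l, memV n l → Dl n P l * (1 - Mv n i l) = Dl n (P.erase i) l := by
  obtain ⟨-, hV, hbar⟩ := hP
  intro l _
  by_cases hlP : l ∈ P
  · by_cases hli : l = i
    · subst hli
      rw [Mv, if_pos rfl, sub_self, mul_zero, Dl_of_notMem (Finset.notMem_erase l P)]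
    · have hlbar : l ≠ bar n i := fun h => hbar i hi (h ▸ hlP)
      have hibar : i ≠ bar n l := fun h => hbar l hlP (h ▸ hi)
      rw [Mv_of_ne hli hlbar, Dl_erase (hV i hi) hi hlP hli hibar]
  · rw [Dl_of_notMem hlP, Dl_of_notMem fun h => hlP (Finset.mem_of_mem_erase h), zero_mul]

/-- Relation 3: for admissible `P ⊆ V` with `|P| > 1` and `i ∈ P`,
one has `Δ_P · (1 - M_i) = Δ_{P∖{i}}` as functions `V → R`. -/
theorem relation3 (n : ℕ) (hn : 1 ≤ n) (P : Finset ℕ) (hP : admissible n P)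
    (hcard : 1 < P.card) (i : ℕ) (hi : i ∈ P) :
    ∀ l, memV n l → Dl n P l * (1 - Mv n i l) = Dl n (P.erase i) l :=
  relation3_general n P hP i hi
end
end

section
/- The set K(𝒬_{2n}) of all K-classes is an R-submodule of the R-module of functions V → R (with R acting by constant functions and operations pointwise), and it is a free R-module of rank 2n+2 with basis the 2n+2 functions {∏_{i=1}^{m}(1 − M_i) : 0 ≤ m ≤ n} ∪ {Δ_{{n+j, n+j+1, …, 2n+2}} : 2 ≤ j ≤ n+2}, the empty product (m = 0) being the constant function 1. -/
/-!
K-classes form a subalgebra of `V → R`. Each edge label `1 - e^a`, with `a = h(k) - h(l)`, is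
prime: `a` has a coordinate `±1`, so there is `π : ℤ^{n+1} →+ ℤ` with `π a = 1`, and the ring
endomorphism of `R` induced by the projection `g ↦ g - π(g) • a` has kernel exactly `(1 - e^a)`.
The same map shows that distinct labels at a vertex are not associated.

The `m`-th proposed basis element vanishes at the vertices `1, …, m` and its value at `m + 1` is a
product of distinct labels of edges from `m + 1` to earlier vertices. Hence a K-class vanishing
at `1, …, m` is, at `m + 1`, divisible by that value, and subtracting a multiple of the `m`-th
element makes it vanish at `m + 1` too. This triangularity gives spanning, and linear
independence follows from the nonzero diagonal.
-/

noncomputable section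

/-- The vertex set `V = {1,…,2n+2}` as a type. -/
def Vt (n : ℕ) : Type := {i : ℕ // memV n i}

/-- `φ : V → R` is a K-class if `1 - e^{α(i,j)}` divides `φ(i) - φ(j)` for every edge. -/
def isKClassV (n : ℕ) (f : Vt n → Rg n) : Prop :=
  ∀ i j : Vt n, j.1 ≠ i.1 → j.1 ≠ bar n i.1 →
    (1 - ex n (axl n i.1 j.1)) ∣ (f i - f j)

theorem Finset.dvd_prod_sub_prod {R ι : Type*} [CommRing R] {p : R} (s : Finset ι) {F G : ι → R}
    (h : ∀ k ∈ s, p ∣ F k - G k) : p ∣ ∏ k ∈ s, F k - ∏ k ∈ s, G k := by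
  simp_rw [← Ideal.mem_span_singleton, ← Ideal.Quotient.mk_eq_mk_iff_sub_mem] at h ⊢
  simp only [map_prod, Finset.prod_congr rfl h]

theorem Finset.prod_dvd_of_prime_of_not_dvd {M ι : Type*} [CommMonoidWithZero M] {x : M}
    (s : Finset ι) {p : ι → M} (hp : ∀ i ∈ s, Prime (p i))
    (hndvd : ∀ i ∈ s, ∀ j ∈ s, i ≠ j → ¬p i ∣ p j) (hdvd : ∀ i ∈ s, p i ∣ x) :
    ∏ i ∈ s, p i ∣ x := by
  classical
  induction s using Finset.induction_on generalizing x with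
  | empty => exact one_dvd x
  | insert a s ha ih =>
    obtain ⟨y, rfl⟩ := hdvd a (mem_insert_self a s)
    rw [prod_insert ha]
    refine mul_dvd_mul_left (p a) (ih (fun i hi ↦ hp i (mem_insert_of_mem hi))
      (fun i hi j hj ↦ hndvd i (mem_insert_of_mem hi) j (mem_insert_of_mem hj)) fun i hi ↦ ?_)
    have hia : i ≠ a := fun h ↦ ha (h ▸ hi)
    exact ((hp i (mem_insert_of_mem hi)).dvd_or_dvd (hdvd i (mem_insert_of_mem hi))).resolve_left
      (hndvd i (mem_insert_of_mem hi) a (mem_insert_self a s) hia)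

def AddMonoidHom.projAlong {G : Type*} [AddCommGroup G] (π : G →+ ℤ) (a : G) : G →+ G :=
  AddMonoidHom.id G - (zmultiplesHom G a).comp π

@[simp]
theorem AddMonoidHom.projAlong_apply {G : Type*} [AddCommGroup G] (π : G →+ ℤ) (a g : G) :
    π.projAlong a g = g - π g • a := rfl

namespace AddMonoidAlgebra

open scoped AddMonoidAlgebra

variable {k G : Type*} [CommRing k] [AddCommGroup G]

theorem one_sub_single_neg (a : G) :
    (1 - single (-a) 1 : k[G]) = single (-a) 1 * (single a 1 - 1) := by
  rw [mul_sub, single_mul_single, neg_add_cancel, mul_one, mul_one, one_def]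

theorem one_sub_single_dvd_one_sub_single_neg (a : G) :
    (1 - single a 1 : k[G]) ∣ 1 - single (-a) 1 := by
  rw [one_sub_single_neg]
  exact (dvd_sub_comm.mp dvd_rfl).mul_left _

theorem one_sub_single_dvd_one_sub_single_zsmul (a : G) (m : ℤ) :
    (1 - single a 1 : k[G]) ∣ 1 - single (m • a) 1 := by
  have hnat (m : ℕ) : (1 - single a 1 : k[G]) ∣ 1 - single ((m : ℤ) • a) 1 := by
    have hpow : single ((m : ℤ) • a) (1 : k) = single a 1 ^ m := by
      rw [single_pow, one_pow, natCast_zsmul]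
    rw [hpow]
    exact one_sub_dvd_one_sub_pow _ m
  obtain ⟨m, rfl | rfl⟩ := Int.eq_nat_or_neg m
  · exact hnat m
  · rw [neg_smul]
    exact (hnat m).trans (one_sub_single_dvd_one_sub_single_neg _)

theorem one_sub_single_dvd_single_sub_single_add (a g : G) :
    (1 - single a 1 : k[G]) ∣ single g 1 - single (a + g) 1 :=
  Dvd.intro (single g 1) (by rw [sub_mul, one_mul, single_mul_single, one_mul])

theorem one_sub_single_dvd_sub_mapDomain_projAlong (π : G →+ ℤ) (a : G) (x : k[G]) :
    (1 - single a 1 : k[G]) ∣ x - mapDomainRingHom k (π.projAlong a) x := by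
  induction x using AddMonoidAlgebra.induction_linear with
  | zero => simp
  | add x y hx hy => simpa only [map_add, add_sub_add_comm] using dvd_add hx hy
  | single g r =>
    have hsplit : single g r - single (g - π g • a) r =
        single (g - π g • a) r * (single (π g • a) 1 - 1) := by
      rw [mul_sub, mul_one, single_mul_single, mul_one, sub_add_cancel]
    simpa only [mapDomainRingHom_apply, mapDomain_single, AddMonoidHom.projAlong_apply,
      hsplit] using (dvd_sub_comm.mp (one_sub_single_dvd_one_sub_single_zsmul a (π g))).mul_left _

section Retraction

variable {a : G} {π : G →+ ℤ}

theorem mapDomain_projAlong_one_sub_single (hπ : π a = 1) :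
    mapDomainRingHom k (π.projAlong a) (1 - single a 1) = 0 := by
  rw [map_sub, map_one, mapDomainRingHom_apply, mapDomain_single, AddMonoidHom.projAlong_apply, hπ,
    one_smul, sub_self, one_def, sub_self]

theorem one_sub_single_dvd_iff (hπ : π a = 1) {x : k[G]} :
    (1 - single a 1 : k[G]) ∣ x ↔ mapDomainRingHom k (π.projAlong a) x = 0 := by
  refine ⟨fun ⟨y, hy⟩ ↦ by rw [hy, map_mul, mapDomain_projAlong_one_sub_single hπ, zero_mul],
    fun hx ↦ ?_⟩
  simpa [hx] using one_sub_single_dvd_sub_mapDomain_projAlong (k := k) π a x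

theorem not_one_sub_single_dvd_one_sub_single [Nontrivial k] {b : G} {π' : G →+ ℤ}
    (hπ : π a = 1) (hπ' : π' b = 1) (hba : b ≠ a) (hba' : b ≠ -a) :
    ¬(1 - single a 1 : k[G]) ∣ 1 - single b 1 := by
  rw [one_sub_single_dvd_iff hπ, map_sub, map_one, mapDomainRingHom_apply, mapDomain_single,
    sub_eq_zero, one_def, single_left_inj one_ne_zero, AddMonoidHom.projAlong_apply, eq_comm,
    sub_eq_zero]
  intro hb
  have hunit : π b * π' a = 1 := by rw [← smul_eq_mul, ← map_zsmul, ← hb, hπ']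
  rcases Int.eq_one_or_neg_one_of_mul_eq_one hunit with h | h
  · exact hba (by rw [hb, h, one_smul])
  · exact hba' (by rw [hb, h, neg_one_smul])

variable [IsDomain k] [UniqueSums G]

theorem prime_one_sub_single (hπ : π a = 1) : Prime (1 - single a 1 : k[G]) := by
  refine ⟨fun h ↦ ?_, fun h ↦ ?_, fun x y ↦ ?_⟩
  · rw [sub_eq_zero, one_def, single_left_inj one_ne_zero] at h
    simp [← h] at hπ
  · simpa using (one_sub_single_dvd_iff hπ).mp (h.dvd (a := 1))
  · simp only [one_sub_single_dvd_iff hπ, map_mul, mul_eq_zero, imp_self]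

end Retraction

end AddMonoidAlgebra

section Triangular

variable {R V : Type*} [CommRing R] {N : ℕ} (v : Fin N ≃ V) {g : Fin N → V → R}

theorem linearIndependent_of_triangular [IsDomain R] (hvanish : ∀ m k, k < m → g m (v k) = 0)
    (hdiag : ∀ m, g m (v m) ≠ 0) : LinearIndependent R g := by
  let A : Matrix (Fin N) (Fin N) R := fun m k ↦ g m (v k)
  have hdet : A.det ≠ 0 := by
    rw [Matrix.det_of_isUpperTriangular fun m k ↦ hvanish m k]
    exact Finset.prod_ne_zero_iff.mpr fun m _ ↦ hdiag m
  exact LinearIndependent.of_comp (LinearMap.funLeft R R v)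
    (Matrix.linearIndependent_rows_of_det_ne_zero hdet)

variable {M : Submodule R (V → R)}

theorem mem_span_of_triangular (hg : ∀ m, g m ∈ M) (hvanish : ∀ m k, k < m → g m (v k) = 0)
    (hdvd : ∀ m, ∀ f ∈ M, (∀ k < m, f (v k) = 0) → g m (v m) ∣ f (v m)) {f : V → R}
    (hf : f ∈ M) : f ∈ Submodule.span R (Set.range g) := by
  suffices key : ∀ d, ∀ f ∈ M, (∀ k : Fin N, (k : ℕ) + d < N → f (v k) = 0) →
      f ∈ Submodule.span R (Set.range g) from key N f hf fun k hk ↦ by omega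
  intro d
  induction d with
  | zero =>
    intro f _ hf0
    convert Submodule.zero_mem _
    funext x
    simpa using hf0 (v.symm x) (by omega)
  | succ d ih =>
    intro f hf hf0
    by_cases hdN : N ≤ d
    · exact ih f hf fun k hk ↦ by omega
    let m : Fin N := ⟨N - 1 - d, by omega⟩
    obtain ⟨c, hc⟩ := hdvd m f hf fun k hk ↦ hf0 k (by simp only [Fin.lt_def, m] at hk; omega)
    have hrest : f - c • g m ∈ Submodule.span R (Set.range g) := by
      refine ih _ (M.sub_mem hf (M.smul_mem c (hg m))) fun k hk ↦ ?_
      rcases lt_or_eq_of_le (show k ≤ m by simp [Fin.le_def, m]; omega) with hkm | rfl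
      · simp [hf0 k (by simp [Fin.lt_def, m] at hkm; omega), hvanish m k hkm]
      · simp [hc, mul_comm]
    simpa using Submodule.add_mem _ hrest
      (Submodule.smul_mem _ c (Submodule.subset_span (Set.mem_range_self m)))

theorem exists_basis_of_triangular [IsDomain R] (hg : ∀ m, g m ∈ M)
    (hvanish : ∀ m k, k < m → g m (v k) = 0) (hdiag : ∀ m, g m (v m) ≠ 0)
    (hdvd : ∀ m, ∀ f ∈ M, (∀ k < m, f (v k) = 0) → g m (v m) ∣ f (v m)) :
    ∃ b : Module.Basis (Fin N) R M, ∀ m, (b m : V → R) = g m := by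
  have hspan : Submodule.span R (Set.range g) = M :=
    le_antisymm (Submodule.span_le.mpr (Set.range_subset_iff.mpr hg))
      fun f hf ↦ mem_span_of_triangular v hg hvanish hdvd hf
  refine ⟨(Module.Basis.span (linearIndependent_of_triangular v hvanish hdiag)).map
    (LinearEquiv.ofEq _ _ hspan), fun m ↦ ?_⟩
  simp [Module.Basis.span_apply]

end Triangular

def gkmSubalgebra {R V : Type*} [CommRing R] (E : V → V → Prop) (p : V → V → R) :
    Subalgebra R (V → R) where
  carrier := {f | ∀ i j, E i j → p i j ∣ f i - f j}
  mul_mem' {f g} hf hg i j hij := by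
    have hsplit : f i * g i - f j * g j = f i * (g i - g j) + g j * (f i - f j) := by ring
    simpa only [Pi.mul_apply, hsplit] using
      dvd_add ((hg i j hij).mul_left _) ((hf i j hij).mul_left _)
  add_mem' {f g} hf hg i j hij := by
    simpa only [Pi.add_apply, add_sub_add_comm] using dvd_add (hf i j hij) (hg i j hij)
  algebraMap_mem' r i j _ := by simp

namespace Quadric

open AddMonoidAlgebra

variable {n : ℕ}

theorem hh_apply (j : ℕ) (t : Fin (n+1)) :
    hh n j t = if j ≤ n+2
      then (if (t:ℕ)+1 = j-1 then 1 else 0) - (if (t:ℕ)+1 = n+1 then 1 else 0)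
      else (if (t:ℕ)+1 = n then 1 else 0) - (if (t:ℕ)+1 = 2*n+2-j then 1 else 0) := by
  by_cases h : j ≤ n+2 <;> simp [hh, h, ee]

theorem exists_hh_apply_sub_eq_neg_one {i j : ℕ} (hi : 1 ≤ i) (hj : j ≤ 2*n+2) (hij : i < j) :
    ∃ t : Fin (n+1), hh n i t - hh n j t = -1 := by
  refine ⟨⟨if j ≤ n+2 then j-2 else if i < n+2 then n else if i = n+2 then n-1 else 2*n+1-i,
    by split_ifs <;> omega⟩, ?_⟩
  rw [hh_apply, hh_apply]
  dsimp only
  split_ifs <;> omega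

theorem exists_addMonoidHom_hh_sub_eq_one {i j : ℕ} (hi : memV n i) (hj : memV n j) (hij : i ≠ j) :
    ∃ π : (Fin (n+1) → ℤ) →+ ℤ, π (hh n j - hh n i) = 1 := by
  obtain ⟨t, ε, hε, ht⟩ : ∃ t : Fin (n+1), ∃ ε : ℤ, ε * ε = 1 ∧ hh n j t - hh n i t = ε := by
    rcases lt_or_gt_of_ne hij with h | h
    · obtain ⟨t, ht⟩ := exists_hh_apply_sub_eq_neg_one (n := n) hi.1 hj.2 h
      exact ⟨t, 1, rfl, by omega⟩
    · obtain ⟨t, ht⟩ := exists_hh_apply_sub_eq_neg_one (n := n) hj.1 hi.2 h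
      exact ⟨t, -1, rfl, ht⟩
  exact ⟨ε • Pi.evalAddMonoidHom (fun _ ↦ ℤ) t, by simp [ht, hε]⟩

theorem hh_injOn : Set.InjOn (hh n) {i | memV n i} := by
  intro i hi j hj h
  by_contra hij
  obtain ⟨π, hπ⟩ := exists_addMonoidHom_hh_sub_eq_one hi hj hij
  simp [h] at hπ

theorem hh_add_hh_ne_two_nsmul {i j : ℕ} (hi : memV n i) (hj : memV n j) (hij : i ≠ j) (l : ℕ) :
    hh n i + hh n j ≠ 2 • hh n l := by
  obtain ⟨π, hπ⟩ := exists_addMonoidHom_hh_sub_eq_one hi hj hij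
  intro h
  have hπ' := congrArg π h
  rw [map_sub] at hπ
  rw [map_add, map_nsmul, nsmul_eq_mul, Nat.cast_ofNat] at hπ'
  omega

theorem hh_add_hh_bar {v : ℕ} (hv : memV n v) : hh n v + hh n (bar n v) = ee n n - ee n (n+1) := by
  obtain ⟨hv1, hv2⟩ := hv
  funext t
  simp only [Pi.add_apply, Pi.sub_apply, hh_apply, ee, bar]
  split_ifs <;> omega

theorem bar_bar {i : ℕ} (hi : memV n i) : bar n (bar n i) = i := by
  unfold bar; have := hi.2; omega

theorem memV_bar {i : ℕ} (hi : memV n i) : memV n (bar n i) := by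
  obtain ⟨h1, h2⟩ := hi
  constructor <;> unfold bar <;> omega

theorem prime_one_sub_ex_axl {l k : ℕ} (hl : memV n l) (hk : memV n k) (hlk : l ≠ k) :
    Prime (1 - ex n (axl n l k)) :=
  have ⟨_, hπ⟩ := exists_addMonoidHom_hh_sub_eq_one hl hk hlk
  prime_one_sub_single hπ

theorem not_one_sub_ex_axl_dvd {l k k' : ℕ} (hl : memV n l) (hk : memV n k) (hk' : memV n k')
    (hlk : l ≠ k) (hlk' : l ≠ k') (hkk' : k ≠ k') :
    ¬(1 - ex n (axl n l k)) ∣ 1 - ex n (axl n l k') := by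
  obtain ⟨_, hπ⟩ := exists_addMonoidHom_hh_sub_eq_one hl hk hlk
  obtain ⟨_, hπ'⟩ := exists_addMonoidHom_hh_sub_eq_one hl hk' hlk'
  refine not_one_sub_single_dvd_one_sub_single hπ hπ' (fun h ↦ hkk' ?_) fun h ↦ ?_
  · exact hh_injOn hk hk' (sub_left_injective h).symm
  · refine hh_add_hh_ne_two_nsmul hk hk' hkk' l ?_
    rw [← sub_eq_zero] at h ⊢
    rw [← h, axl, axl, two_nsmul]
    abel


def kClasses (n : ℕ) : Subalgebra (Rg n) (Vt n → Rg n) :=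
  gkmSubalgebra (fun i j ↦ j.1 ≠ i.1 ∧ j.1 ≠ bar n i.1) (fun i j ↦ 1 - ex n (axl n i.1 j.1))

theorem mem_kClasses {f : Vt n → Rg n} : f ∈ kClasses n ↔ isKClassV n f := by
  simp only [kClasses, gkmSubalgebra, ← Subalgebra.mem_carrier, Set.mem_ofPred_eq, and_imp,
    isKClassV]

theorem one_sub_ex_axl_dvd_swap (i j : ℕ) : (1 - ex n (axl n i j)) ∣ 1 - ex n (axl n j i) := by
  simpa only [ex, axl, neg_sub] using one_sub_single_dvd_one_sub_single_neg (k := ℤ) (axl n i j)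

theorem ex_neg_hh_mem_kClasses : (fun l : Vt n ↦ ex n (-hh n l.1)) ∈ kClasses n := by
  intro i j _
  have h := one_sub_single_dvd_single_sub_single_add (k := ℤ) (axl n i.1 j.1) (-hh n j.1)
  rw [show axl n i.1 j.1 + -hh n j.1 = -hh n i.1 by rw [axl]; abel] at h
  exact dvd_sub_comm.mp h

theorem Mv_eq_ex {v : ℕ} (hv : memV n v) (l : ℕ) : Mv n v l = ex n (hh n v - hh n l) := by
  unfold Mv
  split_ifs with h1 h2
  · rw [h1, sub_self]
    rfl
  · rw [h2, ← hh_add_hh_bar hv, two_smul]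
    congr 1
    abel
  · rfl

theorem Mv_mem_kClasses {v : ℕ} (hv : memV n v) : (fun l : Vt n ↦ Mv n v l.1) ∈ kClasses n := by
  have hfun : (fun l : Vt n ↦ Mv n v l.1) = ex n (hh n v) • fun l : Vt n ↦ ex n (-hh n l.1) := by
    funext l
    simp only [Mv_eq_ex hv, Pi.smul_apply, smul_eq_mul, ex, single_mul_single, mul_one,
      sub_eq_add_neg]
  rw [hfun]
  exact Subalgebra.smul_mem _ ex_neg_hh_mem_kClasses _


theorem mem_Vfin {k : ℕ} : k ∈ Vfin n ↔ memV n k := by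
  simp [Vfin, memV]

theorem Dl_of_mem {P : Finset ℕ} {l : ℕ} (h : l ∈ P) :
    Dl n P l = ∏ k ∈ (Vfin n).filter (fun k ↦ k ∉ P ∧ k ≠ bar n l), (1 - ex n (axl n l k)) :=
  if_pos h

theorem Dl_of_notMem {P : Finset ℕ} {l : ℕ} (h : l ∉ P) : Dl n P l = 0 :=
  if_neg h

theorem one_sub_ex_axl_dvd_Dl_sub_Dl {P : Finset ℕ} (hP : ∀ i ∈ P, bar n i ∉ P) {i j : ℕ}
    (hi : memV n i) (hj : memV n j) (hiP : i ∈ P) (hjP : j ∈ P) (hji : j ≠ i) :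
    (1 - ex n (axl n i j)) ∣ Dl n P i - Dl n P j := by
  set S := fun l ↦ (Vfin n).filter (fun k ↦ k ∉ P ∧ k ≠ bar n l)
  have hbar_ne : bar n j ≠ bar n i := fun h ↦ hji (by rw [← bar_bar hj, h, bar_bar hi])
  have hjS : bar n j ∈ S i := by simp [S, mem_Vfin, memV_bar hj, hP j hjP, hbar_ne]
  have hiS : bar n i ∈ S j := by simp [S, mem_Vfin, memV_bar hi, hP i hiP, hbar_ne.symm]
  have hS : (S i).erase (bar n j) = (S j).erase (bar n i) := by
    ext k
    simp only [S, Finset.mem_erase, Finset.mem_filter]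
    tauto
  have hcross : axl n i (bar n j) = axl n j (bar n i) := by
    rw [axl, axl, sub_eq_sub_iff_add_eq_add, add_comm (hh n _), hh_add_hh_bar hj,
      add_comm (hh n _), hh_add_hh_bar hi]
  rw [Dl_of_mem hiP, Dl_of_mem hjP, ← Finset.mul_prod_erase _ _ hjS,
    ← Finset.mul_prod_erase _ _ hiS, hS, hcross, ← mul_sub]
  refine (Finset.dvd_prod_sub_prod _ fun k _ ↦ ?_).mul_left _
  have h := one_sub_single_dvd_single_sub_single_add (k := ℤ) (axl n i j) (axl n j k)
  rw [show axl n i j + axl n j k = axl n i k by simp only [axl]; abel] at h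
  rwa [sub_sub_sub_cancel_left]

theorem Dl_mem_kClasses {P : Finset ℕ} (hP : ∀ i ∈ P, bar n i ∉ P) :
    (fun l : Vt n ↦ Dl n P l.1) ∈ kClasses n := by
  rintro ⟨i, hi⟩ ⟨j, hj⟩ ⟨hji, hjb⟩
  dsimp only at hji hjb ⊢
  by_cases hiP : i ∈ P <;> by_cases hjP : j ∈ P
  · exact one_sub_ex_axl_dvd_Dl_sub_Dl hP hi hj hiP hjP hji
  · rw [Dl_of_mem hiP, Dl_of_notMem hjP, sub_zero]
    exact Finset.dvd_prod_of_mem _ (by simp [mem_Vfin, hj, hjP, hjb])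
  · have hib : i ≠ bar n j := fun h ↦ hjb (by rw [h, bar_bar hj])
    rw [Dl_of_notMem hiP, Dl_of_mem hjP, zero_sub, dvd_neg]
    exact (one_sub_ex_axl_dvd_swap i j).trans
      (Finset.dvd_prod_of_mem _ (by simp [mem_Vfin, hi, hiP, hib]))
  · simp [Dl_of_notMem hiP, Dl_of_notMem hjP]


theorem prod_one_sub_ex_axl_ne_zero {l : ℕ} (hl : memV n l) {S : Finset ℕ}
    (hS : ∀ k ∈ S, memV n k ∧ k ≠ l) : ∏ k ∈ S, (1 - ex n (axl n l k)) ≠ 0 :=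
  Finset.prod_ne_zero_iff.mpr fun k hk ↦
    (prime_one_sub_ex_axl hl (hS k hk).1 (hS k hk).2.symm).ne_zero

theorem prod_one_sub_ex_axl_dvd {f : Vt n → Rg n} (hf : f ∈ kClasses n) (l : Vt n)
    {S : Finset ℕ} (hS : ∀ k ∈ S, ∃ hk : memV n k, k ≠ l.1 ∧ k ≠ bar n l.1 ∧ f ⟨k, hk⟩ = 0) :
    ∏ k ∈ S, (1 - ex n (axl n l.1 k)) ∣ f l := by
  refine Finset.prod_dvd_of_prime_of_not_dvd S (fun k hk ↦ ?_) (fun k hk k' hk' hkk' ↦ ?_)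
    fun k hk ↦ ?_
  · obtain ⟨hkV, hkl, -⟩ := hS k hk
    exact prime_one_sub_ex_axl l.2 hkV (Ne.symm hkl)
  · obtain ⟨hkV, hkl, -⟩ := hS k hk
    obtain ⟨hk'V, hk'l, -⟩ := hS k' hk'
    exact not_one_sub_ex_axl_dvd l.2 hkV hk'V (Ne.symm hkl) (Ne.symm hk'l) hkk'
  · obtain ⟨hkV, hkl, hkb, hfk⟩ := hS k hk
    simpa [hfk] using hf l ⟨k, hkV⟩ ⟨hkl, hkb⟩

def vertexEquiv (n : ℕ) : Fin (2*n+2) ≃ Vt n where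
  toFun m := ⟨m + 1, by omega, by omega⟩
  invFun l := ⟨l.1 - 1, by have := l.2.2; omega⟩
  left_inv m := by ext; simp
  right_inv l := Subtype.ext (by have := l.2.1; simp; omega)

@[simp]
theorem vertexEquiv_apply_coe (m : Fin (2*n+2)) : (vertexEquiv n m).1 = m + 1 := rfl

def generator (n : ℕ) (m : Fin (2*n+2)) : Vt n → Rg n :=
  if (m : ℕ) ≤ n then (fun l => ∏ i ∈ Finset.Icc 1 (m : ℕ), (1 - Mv n i l.1))
  else (fun l => Dl n (Finset.Icc ((m : ℕ)+1) (2*n+2)) l.1)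

theorem generator_mem_kClasses (m : Fin (2*n+2)) : generator n m ∈ kClasses n := by
  unfold generator
  split_ifs with hm
  · rw [← Finset.prod_fn]
    refine Subalgebra.prod_mem _ fun i hi ↦ Subalgebra.sub_mem _ (Subalgebra.one_mem _) ?_
    have := Finset.mem_Icc.mp hi
    exact Mv_mem_kClasses ⟨this.1, by omega⟩
  · refine Dl_mem_kClasses fun i hi ↦ ?_
    simp only [Finset.mem_Icc, bar] at hi ⊢
    omega

theorem generator_vertexEquiv_of_lt {m k : Fin (2*n+2)} (hkm : k < m) :
    generator n m (vertexEquiv n k) = 0 := by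
  rw [Fin.lt_def] at hkm
  unfold generator
  split_ifs with hm
  · refine Finset.prod_eq_zero (i := k + 1) (Finset.mem_Icc.mpr ⟨by omega, by omega⟩) ?_
    simp [Mv]
  · exact Dl_of_notMem (by simp; omega)

theorem exists_generator_vertexEquiv_self_eq_prod (m : Fin (2*n+2)) :
    ∃ S : Finset ℕ, (∀ k ∈ S, memV n k ∧ k ≤ m ∧ k ≠ bar n (m + 1)) ∧
      generator n m (vertexEquiv n m) = ∏ k ∈ S, (1 - ex n (axl n (m + 1) k)) := by
  unfold generator
  split_ifs with hm
  · refine ⟨Finset.Icc 1 m, fun k hk ↦ ?_, Finset.prod_congr rfl fun k hk ↦ ?_⟩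
    · simp only [Finset.mem_Icc, memV, bar] at hk ⊢
      omega
    · have hk := Finset.mem_Icc.mp hk
      rw [vertexEquiv_apply_coe, Mv_eq_ex ⟨hk.1, by omega⟩]
      rfl
  · refine ⟨_, fun k hk ↦ ?_, Dl_of_mem (by simp; omega)⟩
    simp only [Finset.mem_filter, mem_Vfin, Finset.mem_Icc, vertexEquiv_apply_coe] at hk
    exact ⟨hk.1, by have := hk.1.2; omega, hk.2.2⟩


theorem generator_vertexEquiv_self_ne_zero (m : Fin (2*n+2)) :
    generator n m (vertexEquiv n m) ≠ 0 := by
  obtain ⟨S, hS, heq⟩ := exists_generator_vertexEquiv_self_eq_prod m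
  rw [heq]
  refine prod_one_sub_ex_axl_ne_zero (vertexEquiv n m).2 fun k hk ↦ ⟨(hS k hk).1, ?_⟩
  rw [vertexEquiv_apply_coe]
  have := (hS k hk).2.1
  omega

theorem generator_vertexEquiv_self_dvd (m : Fin (2*n+2)) {f : Vt n → Rg n} (hf : f ∈ kClasses n)
    (hf0 : ∀ k < m, f (vertexEquiv n k) = 0) :
    generator n m (vertexEquiv n m) ∣ f (vertexEquiv n m) := by
  obtain ⟨S, hS, heq⟩ := exists_generator_vertexEquiv_self_eq_prod m
  rw [heq]
  refine prod_one_sub_ex_axl_dvd hf (vertexEquiv n m) fun k hk ↦ ?_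
  obtain ⟨hkV, hkm, hkb⟩ := hS k hk
  have hk1 := hkV.1
  have hvk : vertexEquiv n ⟨k - 1, by omega⟩ = ⟨k, hkV⟩ := Subtype.ext (by simp; omega)
  refine ⟨hkV, by rw [vertexEquiv_apply_coe]; omega, hkb, ?_⟩
  rw [← hvk]
  exact hf0 _ (Fin.lt_def.mpr (by simp only; omega))

end Quadric

open Quadric in
/-- The index `m > n` stands for `j = m - n + 1`, so that `{n+j, …, 2n+2} = {m+1, …, 2n+2}`. -/
theorem kclasses_free_module_general (n : ℕ) :
    ∃ (Ksub : Submodule (Rg n) (Vt n → Rg n)) (b : Module.Basis (Fin (2*n+2)) (Rg n) Ksub),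
      (Ksub : Set (Vt n → Rg n)) = {f | isKClassV n f} ∧
      ∀ m : Fin (2*n+2), (b m : Vt n → Rg n) =
        if (m : ℕ) ≤ n then (fun l => ∏ i ∈ Finset.Icc 1 (m : ℕ), (1 - Mv n i l.1))
        else (fun l => Dl n (Finset.Icc ((m : ℕ)+1) (2*n+2)) l.1) := by
  obtain ⟨b, hb⟩ := exists_basis_of_triangular (vertexEquiv n) (M := (kClasses n).toSubmodule)
    generator_mem_kClasses (fun _ _ ↦ generator_vertexEquiv_of_lt)
    generator_vertexEquiv_self_ne_zero fun m _ hf ↦ generator_vertexEquiv_self_dvd m hf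
  exact ⟨_, b, Set.ext fun _ ↦ mem_kClasses, hb⟩

/-- the set `K(𝒬_{2n})` of K-classes is an `R`-submodule of the functions
`V → R`, free of rank `2n+2`, with basis
`{∏_{i=1}^{m}(1-M_i) : 0 ≤ m ≤ n} ∪ {Δ_{{n+j,…,2n+2}} : 2 ≤ j ≤ n+2}`
(indexed by `m ∈ {0,…,n}` and, for the index `m ∈ {n+1,…,2n+1}`, by `j = m-n+1`, so that
`{n+j,…,2n+2} = {m+1,…,2n+2}`). -/
theorem kclasses_free_module (n : ℕ) (hn : 1 ≤ n) :
    ∃ (Ksub : Submodule (Rg n) (Vt n → Rg n)) (b : Module.Basis (Fin (2*n+2)) (Rg n) Ksub),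
      (Ksub : Set (Vt n → Rg n)) = {f | isKClassV n f} ∧
      ∀ m : Fin (2*n+2), (b m : Vt n → Rg n) =
        if (m : ℕ) ≤ n then (fun l => ∏ i ∈ Finset.Icc 1 (m : ℕ), (1 - Mv n i l.1))
        else (fun l => Dl n (Finset.Icc ((m : ℕ)+1) (2*n+2)) l.1) :=
  kclasses_free_module_general n
end
end
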